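/- (Progress.) If Γ⟨G⟩ is a well-formed global type under typing context, then Γ⟨G⟩ satisfies progress; that is, its associated configuration s exists and either every local type in s is end, or there exist a label α and a configuration s' with s →α s'. -/
import Mathlib


namespace RMPST

abbrev Role := String
abbrev Var := String
abbrev Label := String
abbrev TVar := String

/-- Base types `S`. -/
inductive BaseTy
  | int | bool | unit
deriving DecidableEq

/-- Expressions `E`: variables, integer constants, unary and binary operations. -/
inductive Expr
  | var (x : Var)
  | intLit (n : ℤ)
  | boolLit (b : Bool)
  | neg (e : Expr)
  | plus (e₁ e₂ : Expr)
  | minus (e₁ e₂ : Expr)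
  | eq (e₁ e₂ : Expr)
  | lt (e₁ e₂ : Expr)
deriving DecidableEq

def Expr.fv : Expr → Finset Var
  | .var x => {x}
  | .intLit _ => ∅
  | .boolLit _ => ∅
  | .neg e => e.fv
  | .plus e₁ e₂ => e₁.fv ∪ e₂.fv
  | .minus e₁ e₂ => e₁.fv ∪ e₂.fv
  | .eq e₁ e₂ => e₁.fv ∪ e₂.fv
  | .lt e₁ e₂ => e₁.fv ∪ e₂.fv

/-- Refinement type `(x : S){E}`. -/
structure RefTy where
  bvar : Var
  base : BaseTy
  pred : Expr
deriving DecidableEq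

def RefTy.fv (T : RefTy) : Finset Var := T.pred.fv.erase T.bvar

/-- Semantic values for the logical (SMT) encoding. -/
inductive Value
  | vint (n : ℤ)
  | vbool (b : Bool)
  | vunit
deriving DecidableEq

def Value.hasBase : Value → BaseTy → Prop
  | .vint _, .int => True
  | .vbool _, .bool => True
  | .vunit, .unit => True
  | _, _ => False

abbrev Env := Var → Value

def Env.update (σ : Env) (x : Var) (v : Value) : Env :=
  fun y => if y = x then v else σ y

def Expr.eval (σ : Env) : Expr → Option Value
  | .var x => some (σ x)
  | .intLit n => some (.vint n)
  | .boolLit b => some (.vbool b)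
  | .neg e =>
      match e.eval σ with
      | some (.vint n) => some (.vint (-n))
      | _ => none
  | .plus e₁ e₂ =>
      match e₁.eval σ, e₂.eval σ with
      | some (.vint a), some (.vint b) => some (.vint (a + b))
      | _, _ => none
  | .minus e₁ e₂ =>
      match e₁.eval σ, e₂.eval σ with
      | some (.vint a), some (.vint b) => some (.vint (a - b))
      | _, _ => none
  | .eq e₁ e₂ =>
      match e₁.eval σ, e₂.eval σ with
      | some v₁, some v₂ => some (.vbool (decide (v₁ = v₂)))
      | _, _ => none
  | .lt e₁ e₂ =>
      match e₁.eval σ, e₂.eval σ with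
      | some (.vint a), some (.vint b) => some (.vbool (decide (a < b)))
      | _, _ => none

/-- An expression holds in an environment when it evaluates to `true`. -/
def Expr.holds (σ : Env) (E : Expr) : Prop := E.eval σ = some (.vbool true)

/-- Multiplicities `θ ∈ {0, ω}`. -/
inductive Mult
  | zero | omega
deriving DecidableEq

/-- A local context binding `x^θ : T`. -/
structure LBind where
  x : Var
  mult : Mult
  ty : RefTy
deriving DecidableEq

/-- Local typing contexts Σ. -/
abbrev LCtx := List LBind

/-- A global context binding `x^P : T` (P : set of roles knowing the value). -/
structure GBind where
  x : Var
  roles : Finset Role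
  ty : RefTy
deriving DecidableEq

/-- Global typing contexts Γ. -/
abbrev GCtx := List GBind

def GCtx.dom (Γ : GCtx) : Finset Var := (Γ.map GBind.x).toFinset

/-- Extension of a global typing context: `Γ⟨x^P:T⟩` (partial). -/
def GCtx.ext : GCtx → Var → Finset Role → RefTy → Option GCtx
  | [], x, P, T => some [⟨x, P, T⟩]
  | b :: Γ, x, P, T =>
    if b.x = x then
      if (b.roles = ∅ ∨ b.roles = P) ∧ b.ty = T then some (⟨x, P, T⟩ :: Γ) else none
    else (GCtx.ext Γ x P T).map (b :: ·)

/-- Extension of a local typing context: `Σ⟨x^θ:T⟩` (partial). -/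
def LCtx.ext : LCtx → Var → Mult → RefTy → Option LCtx
  | [], x, θ, T => some [⟨x, θ, T⟩]
  | b :: Δ, x, θ, T =>
    if b.x = x then
      if (b.mult = .zero ∨ (b.mult = .omega ∧ θ = .omega)) ∧ b.ty = T then
        some (⟨x, θ, T⟩ :: Δ)
      else none
    else (LCtx.ext Δ x θ T).map (b :: ·)

/-- Projection of a global context onto participant p: `Γ↾p`. -/
def GCtx.proj (Γ : GCtx) (p : Role) : LCtx :=
  Γ.map fun b => ⟨b.x, if p ∈ b.roles then Mult.omega else Mult.zero, b.ty⟩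

/-- Promotion Σ⁺: all irrelevant variables become unrestricted. -/
def LCtx.promote (Δ : LCtx) : LCtx := Δ.map fun b => ⟨b.x, Mult.omega, b.ty⟩

/-- Logical encoding of a context binding: `σ` satisfies `x^θ:(v:S){E}`. -/
def LBind.sat (σ : Env) (b : LBind) : Prop :=
  (σ b.x).hasBase b.ty.base ∧ Expr.holds (σ.update b.ty.bvar (σ b.x)) b.ty.pred

/-- Logical encoding `⟦Σ⟧` of a local typing context. -/
def LCtx.sat (σ : Env) (Δ : LCtx) : Prop := ∀ b ∈ Δ, b.sat σ

/-- Validity of the implication `⟦Σ⟧ ∧ ⟦E₁⟧ ⟹ ⟦E₂⟧` (refinements of `v : S`). -/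
def Entails (Δ : LCtx) (S : BaseTy) (v : Var) (E₁ E₂ : Expr) : Prop :=
  ∀ (σ : Env) (u : Value), u.hasBase S → Δ.sat σ →
    Expr.holds (σ.update v u) E₁ → Expr.holds (σ.update v u) E₂

/-- Expression typing `Σ ⊢ E : T`. -/
inductive ExprTyped : LCtx → Expr → RefTy → Prop
  | const (Δ : LCtx) (n : ℤ) (v : Var) :
      ExprTyped Δ (.intLit n) ⟨v, .int, .eq (.var v) (.intLit n)⟩
  | var (Δ₁ Δ₂ : LCtx) (x : Var) (T : RefTy) :
      ExprTyped (Δ₁ ++ ⟨x, .omega, T⟩ :: Δ₂) (.var x) T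
  | plus {Δ : LCtx} {E₁ E₂ : Expr} {v₁ v₂ : Var} {P₁ P₂ : Expr} (v : Var) :
      ExprTyped Δ E₁ ⟨v₁, .int, P₁⟩ →
      ExprTyped Δ E₂ ⟨v₂, .int, P₂⟩ →
      ExprTyped Δ (.plus E₁ E₂) ⟨v, .int, .eq (.var v) (.plus E₁ E₂)⟩
  | sub {Δ : LCtx} {E : Expr} {v : Var} {S : BaseTy} {P₁ P₂ : Expr} :
      ExprTyped Δ E ⟨v, S, P₁⟩ →
      Entails Δ S v P₁ P₂ →
      ExprTyped Δ E ⟨v, S, P₂⟩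

/-- Well-formedness of a refinement type: `Σ ⊢ (x:S){E} ty`, i.e. `Σ⁺, x:S ⊢ E : bool`. -/
def WfTy (Δ : LCtx) (T : RefTy) : Prop :=
  ∃ (w : Var) (v : Var) (P : Expr),
    ExprTyped (Δ.promote ++ [⟨T.bvar, .omega, ⟨w, T.base, .boolLit true⟩⟩]) T.pred
      ⟨v, .bool, P⟩

/- ------------------------------------------------------------------ -/
/- Global and local session types -/

mutual
/-- Global types `G`. -/
inductive GTy
  | msg (p q : Role) (bs : GBranches)
  | mu (t : TVar) (x : Var) (T : RefTy) (E : Expr) (body : GTy)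
  | tvar (t : TVar) (x : Var) (E : Expr)
  | end_
/-- Nonempty branch lists `{lᵢ(xᵢ:Tᵢ).Gᵢ}_{i∈I}` of a global message. -/
inductive GBranches
  | single (l : Label) (x : Var) (T : RefTy) (cont : GTy)
  | cons (l : Label) (x : Var) (T : RefTy) (cont : GTy) (rest : GBranches)
end

mutual
/-- Local types `L`. -/
inductive LTy
  | select (q : Role) (bs : LBranches)   -- internal choice q⊕{...}
  | branch (q : Role) (bs : LBranches)   -- external choice q&{...}
  | silent (l : Label) (x : Var) (T : RefTy) (cont : LTy)
  | mu (t : TVar) (x : Var) (T : RefTy) (E : Expr) (body : LTy)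
  | tvar (t : TVar) (x : Var) (E : Expr)
  | end_
/-- Nonempty branch lists of a local choice. -/
inductive LBranches
  | single (l : Label) (x : Var) (T : RefTy) (cont : LTy)
  | cons (l : Label) (x : Var) (T : RefTy) (cont : LTy) (rest : LBranches)
end

def GBranches.toList : GBranches → List (Label × Var × RefTy × GTy)
  | .single l x T G => [(l, x, T, G)]
  | .cons l x T G rest => (l, x, T, G) :: rest.toList

def LBranches.toList : LBranches → List (Label × Var × RefTy × LTy)
  | .single l x T L => [(l, x, T, L)]
  | .cons l x T L rest => (l, x, T, L) :: rest.toList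

def GBranches.labels (bs : GBranches) : List Label := bs.toList.map (·.1)

/-- The shape (index set, labels, payload variables, payload types) of branches. -/
def GBranches.shape (bs : GBranches) : List (Label × Var × RefTy) :=
  bs.toList.map fun b => (b.1, b.2.1, b.2.2.1)

def LBranches.shape (bs : LBranches) : List (Label × Var × RefTy) :=
  bs.toList.map fun b => (b.1, b.2.1, b.2.2.1)

/-- All branches are syntactically identical to `l(x:T).L` (used for plain merge). -/
def LBranches.allEq (bs : LBranches) (l : Label) (x : Var) (T : RefTy) (L : LTy) : Prop :=
  ∀ b ∈ bs.toList, b = (l, x, T, L)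

mutual
/-- Syntactic validity: pairwise distinct labels in every message. -/
def GTy.valid : GTy → Prop
  | .msg _ _ bs => bs.labels.Nodup ∧ GBranches.validB bs
  | .mu _ _ _ _ G => GTy.valid G
  | .tvar _ _ _ => True
  | .end_ => True
def GBranches.validB : GBranches → Prop
  | .single _ _ _ G => GTy.valid G
  | .cons _ _ _ G rest => GTy.valid G ∧ GBranches.validB rest
end

mutual
/-- Roles occurring (participating) in a global type. -/
def GTy.roles : GTy → Finset Role
  | .msg p q bs => {p, q} ∪ GBranches.rolesB bs
  | .mu _ _ _ _ G => GTy.roles G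
  | .tvar _ _ _ => ∅
  | .end_ => ∅
def GBranches.rolesB : GBranches → Finset Role
  | .single _ _ _ G => GTy.roles G
  | .cons _ _ _ G rest => GTy.roles G ∪ GBranches.rolesB rest
end

mutual
/-- Free type variables of a global type. -/
def GTy.ftv : GTy → Finset TVar
  | .msg _ _ bs => GBranches.ftvB bs
  | .mu t _ _ _ G => (GTy.ftv G).erase t
  | .tvar t _ _ => {t}
  | .end_ => ∅
def GBranches.ftvB : GBranches → Finset TVar
  | .single _ _ _ G => GTy.ftv G
  | .cons _ _ _ G rest => GTy.ftv G ∪ GBranches.ftvB rest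
end

mutual
/-- Free (expression) variables of a global type. -/
def GTy.fv : GTy → Finset Var
  | .msg _ _ bs => GBranches.fvB bs
  | .mu _ x T E G => T.fv ∪ E.fv ∪ (GTy.fv G).erase x
  | .tvar _ x E => insert x E.fv
  | .end_ => ∅
def GBranches.fvB : GBranches → Finset Var
  | .single _ x T G => T.fv ∪ (GTy.fv G).erase x
  | .cons _ x T G rest => (T.fv ∪ (GTy.fv G).erase x) ∪ GBranches.fvB rest
end

/-- `G` is closed under `Γ`: all free variables of `G` are in the domain of `Γ`. -/
def ClosedUnder (Γ : GCtx) (G : GTy) : Prop := GTy.fv G ⊆ GCtx.dom Γ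

/-- `t` occurs only guarded (under a message prefix) in `G`. -/
def GTy.guarded (t : TVar) : GTy → Prop
  | .msg _ _ _ => True
  | .mu t' _ _ _ G => t = t' ∨ GTy.guarded t G
  | .tvar t' _ _ => t ≠ t'
  | .end_ => True

mutual
/-- Contractiveness of global types. -/
def GTy.contractive : GTy → Prop
  | .msg _ _ bs => GBranches.contractiveB bs
  | .mu t _ _ _ G => GTy.guarded t G ∧ GTy.contractive G
  | .tvar _ _ _ => True
  | .end_ => True
def GBranches.contractiveB : GBranches → Prop
  | .single _ _ _ G => GTy.contractive G
  | .cons _ _ _ G rest => GTy.contractive G ∧ GBranches.contractiveB rest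
end

mutual
/-- Substitution `G[μt(x:T).G₀ / t]` (each `t(x:=E)` becomes `μt(x:T)(x:=E).G₀`). -/
def GTy.substT (t₀ : TVar) (x₀ : Var) (T₀ : RefTy) (G₀ : GTy) : GTy → GTy
  | .msg p q bs => .msg p q (GBranches.substTB t₀ x₀ T₀ G₀ bs)
  | .mu t x T E G =>
      if t = t₀ then .mu t x T E G else .mu t x T E (GTy.substT t₀ x₀ T₀ G₀ G)
  | .tvar t x E => if t = t₀ then .mu t₀ x₀ T₀ E G₀ else .tvar t x E
  | .end_ => .end_
def GBranches.substTB (t₀ : TVar) (x₀ : Var) (T₀ : RefTy) (G₀ : GTy) :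
    GBranches → GBranches
  | .single l x T G => .single l x T (GTy.substT t₀ x₀ T₀ G₀ G)
  | .cons l x T G rest =>
      .cons l x T (GTy.substT t₀ x₀ T₀ G₀ G) (GBranches.substTB t₀ x₀ T₀ G₀ rest)
end

mutual
/-- Substitution `L[μt(x:T).L₀ / t]` for local types. -/
def LTy.substT (t₀ : TVar) (x₀ : Var) (T₀ : RefTy) (L₀ : LTy) : LTy → LTy
  | .select q bs => .select q (LBranches.substTB t₀ x₀ T₀ L₀ bs)
  | .branch q bs => .branch q (LBranches.substTB t₀ x₀ T₀ L₀ bs)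
  | .silent l x T L => .silent l x T (LTy.substT t₀ x₀ T₀ L₀ L)
  | .mu t x T E L =>
      if t = t₀ then .mu t x T E L else .mu t x T E (LTy.substT t₀ x₀ T₀ L₀ L)
  | .tvar t x E => if t = t₀ then .mu t₀ x₀ T₀ E L₀ else .tvar t x E
  | .end_ => .end_
def LBranches.substTB (t₀ : TVar) (x₀ : Var) (T₀ : RefTy) (L₀ : LTy) :
    LBranches → LBranches
  | .single l x T L => .single l x T (LTy.substT t₀ x₀ T₀ L₀ L)
  | .cons l x T L rest =>
      .cons l x T (LTy.substT t₀ x₀ T₀ L₀ L) (LBranches.substTB t₀ x₀ T₀ L₀ rest)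
end

/- ------------------------------------------------------------------ -/
/- Endpoint projection -/

mutual
/-- Projection `Γ ⊢ G ↾ r = (Γ↾r)⟨L⟩` (the local context is always `Γ↾r`). -/
inductive Proj : GCtx → GTy → Role → LTy → Prop
  | send {Γ : GCtx} {p q : Role} {bs : GBranches} {bs' : LBranches} :
      p ≠ q →
      ProjBranches Γ p q bs p bs' →
      Proj Γ (.msg p q bs) p (.select q bs')
  | recv {Γ : GCtx} {p q : Role} {bs : GBranches} {bs' : LBranches} :
      p ≠ q →
      ProjBranches Γ p q bs q bs' →
      Proj Γ (.msg p q bs) q (.branch p bs')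
  | phi {Γ : GCtx} {p q r : Role} {bs : GBranches} {bs' : LBranches}
      {l : Label} {x : Var} {T : RefTy} {L : LTy} :
      r ≠ p → r ≠ q →
      ProjBranches Γ p q bs r bs' →
      LBranches.allEq bs' l x T L →
      Proj Γ (.msg p q bs) r (.silent l x T L)
  | recIn {Γ : GCtx} {t : TVar} {x : Var} {T : RefTy} {E : Expr} {G : GTy}
      {r : Role} {Γ₁ : GCtx} {L : LTy} :
      r ∈ GTy.roles G →
      WfTy (GCtx.proj Γ r) T →
      ExprTyped (GCtx.proj Γ r) E T →
      GCtx.ext Γ x (GTy.roles G) T = some Γ₁ →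
      Proj Γ₁ G r L →
      Proj Γ (.mu t x T E G) r (.mu t x T E L)
  | recOut {Γ : GCtx} {t : TVar} {x : Var} {T : RefTy} {E : Expr} {G : GTy} {r : Role} :
      r ∉ GTy.roles G →
      Proj Γ (.mu t x T E G) r .end_
  | tvar {Γ : GCtx} {t : TVar} {x : Var} {E : Expr} {r : Role} {T : RefTy} :
      LBind.mk x .omega T ∈ GCtx.proj Γ r →
      ExprTyped (GCtx.proj Γ r) E T →
      Proj Γ (.tvar t x E) r (.tvar t x E)
  | end_ {Γ : GCtx} {r : Role} :
      Proj Γ .end_ r .end_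
/-- Branchwise projection of global branches. -/
inductive ProjBranches : GCtx → Role → Role → GBranches → Role → LBranches → Prop
  | single {Γ : GCtx} {p q : Role} {l : Label} {x : Var} {T : RefTy} {G : GTy}
      {r : Role} {Γ₁ : GCtx} {L : LTy} :
      WfTy (GCtx.proj Γ r) T →
      GCtx.ext Γ x {p, q} T = some Γ₁ →
      Proj Γ₁ G r L →
      ProjBranches Γ p q (.single l x T G) r (.single l x T L)
  | cons {Γ : GCtx} {p q : Role} {l : Label} {x : Var} {T : RefTy} {G : GTy}
      {rest : GBranches} {r : Role} {Γ₁ : GCtx} {L : LTy} {rest' : LBranches} :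
      WfTy (GCtx.proj Γ r) T →
      GCtx.ext Γ x {p, q} T = some Γ₁ →
      Proj Γ₁ G r L →
      ProjBranches Γ p q rest r rest' →
      ProjBranches Γ p q (.cons l x T G rest) r (.cons l x T L rest')
end

/-- Well-formed global type under a typing context. -/
def Wellformed (Γ : GCtx) (G : GTy) : Prop :=
  GTy.ftv G = ∅ ∧ GTy.contractive G ∧ ∀ r ∈ GTy.roles G, ∃ L, Proj Γ G r L

/- ------------------------------------------------------------------ -/
/- Labelled transition systems -/

/-- LTS labels `α = p→q : l(x:T)`. -/
structure GLabel where
  sender : Role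
  receiver : Role
  label : Label
  x : Var
  ty : RefTy
deriving DecidableEq

mutual
/-- LTS over global types under global contexts: `Γ⟨G⟩ →α Γ'⟨G'⟩`. -/
inductive GStep : GCtx → GTy → GLabel → GCtx → GTy → Prop
  | pfx {Γ : GCtx} {p q : Role} {bs : GBranches} {l : Label} {x : Var} {T : RefTy}
      {G : GTy} {Γ' : GCtx} :
      (l, x, T, G) ∈ GBranches.toList bs →
      GCtx.ext Γ x {p, q} T = some Γ' →
      GStep Γ (.msg p q bs) ⟨p, q, l, x, T⟩ Γ' G
  | cnt {Γ : GCtx} {p q : Role} {bs : GBranches} {α : GLabel} {Γ' : GCtx}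
      {bs' : GBranches} :
      p ≠ α.sender → p ≠ α.receiver → q ≠ α.sender → q ≠ α.receiver →
      GBranchesStep Γ bs α Γ' bs' →
      GStep Γ (.msg p q bs) α Γ' (.msg p q bs')
  | recur {Γ : GCtx} {t : TVar} {x : Var} {T : RefTy} {E : Expr} {G : GTy}
      {α : GLabel} {Γ₁ Γ' : GCtx} {G' : GTy} :
      GCtx.ext Γ x (GTy.roles G) T = some Γ₁ →
      GStep Γ₁ (GTy.substT t x T G G) α Γ' G' →
      GStep Γ (.mu t x T E G) α Γ' G'
inductive GBranchesStep : GCtx → GBranches → GLabel → GCtx → GBranches → Prop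
  | single {Γ : GCtx} {l : Label} {x : Var} {T : RefTy} {G : GTy} {α : GLabel}
      {Γ₁ Γ' : GCtx} {G' : GTy} :
      GCtx.ext Γ x ∅ T = some Γ₁ →
      GStep Γ₁ G α Γ' G' →
      GBranchesStep Γ (.single l x T G) α Γ' (.single l x T G')
  | cons {Γ : GCtx} {l : Label} {x : Var} {T : RefTy} {G : GTy} {rest : GBranches}
      {α : GLabel} {Γ₁ Γ' : GCtx} {G' : GTy} {rest' : GBranches} :
      GCtx.ext Γ x ∅ T = some Γ₁ →
      GStep Γ₁ G α Γ' G' →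
      GBranchesStep Γ rest α Γ' rest' →
      GBranchesStep Γ (.cons l x T G rest) α Γ' (.cons l x T G' rest')
end

mutual
/-- Silent steps of local types: `Σ⟨L⟩ →ε Σ'⟨L'⟩`. -/
inductive EStep : LCtx → LTy → LCtx → LTy → Prop
  | phi {Δ : LCtx} {l : Label} {x : Var} {T : RefTy} {L : LTy} {Δ' : LCtx} :
      LCtx.ext Δ x .zero T = some Δ' →
      EStep Δ (.silent l x T L) Δ' L
  | cntSelect {Δ : LCtx} {q : Role} {bs : LBranches} {Δ' : LCtx} {bs' : LBranches} :
      LBranchesEStep Δ bs Δ' bs' →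
      EStep Δ (.select q bs) Δ' (.select q bs')
  | cntBranch {Δ : LCtx} {q : Role} {bs : LBranches} {Δ' : LCtx} {bs' : LBranches} :
      LBranchesEStep Δ bs Δ' bs' →
      EStep Δ (.branch q bs) Δ' (.branch q bs')
  | recur {Δ : LCtx} {t : TVar} {x : Var} {T : RefTy} {E : Expr} {L : LTy} {Δ' : LCtx} :
      LCtx.ext Δ x .omega T = some Δ' →
      EStep Δ (.mu t x T E L) Δ' (LTy.substT t x T L L)
inductive LBranchesEStep : LCtx → LBranches → LCtx → LBranches → Prop
  | single {Δ : LCtx} {l : Label} {x : Var} {T : RefTy} {L : LTy}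
      {Δ₁ Δ' : LCtx} {L' : LTy} :
      LCtx.ext Δ x .zero T = some Δ₁ →
      EStep Δ₁ L Δ' L' →
      LBranchesEStep Δ (.single l x T L) Δ' (.single l x T L')
  | cons {Δ : LCtx} {l : Label} {x : Var} {T : RefTy} {L : LTy} {rest : LBranches}
      {Δ₁ Δ' : LCtx} {L' : LTy} {rest' : LBranches} :
      LCtx.ext Δ x .zero T = some Δ₁ →
      EStep Δ₁ L Δ' L' →
      LBranchesEStep Δ rest Δ' rest' →
      LBranchesEStep Δ (.cons l x T L rest) Δ' (.cons l x T L' rest')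
end

/-- Reflexive-transitive closure `→ε*` of silent steps. -/
def ESteps (Δ : LCtx) (L : LTy) (Δ' : LCtx) (L' : LTy) : Prop :=
  Relation.ReflTransGen (fun a b : LCtx × LTy => EStep a.1 a.2 b.1 b.2) (Δ, L) (Δ', L')

/-- Labelled steps of local types without preceding silent steps. -/
inductive LStepBase : LCtx → LTy → GLabel → LCtx → LTy → Prop
  | send {Δ : LCtx} {q : Role} {bs : LBranches} {p : Role} {l : Label} {x : Var}
      {T : RefTy} {L : LTy} {Δ' : LCtx} :
      (l, x, T, L) ∈ LBranches.toList bs →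
      LCtx.ext Δ x .omega T = some Δ' →
      LStepBase Δ (.select q bs) ⟨p, q, l, x, T⟩ Δ' L
  | recv {Δ : LCtx} {p : Role} {bs : LBranches} {q : Role} {l : Label} {x : Var}
      {T : RefTy} {L : LTy} {Δ' : LCtx} :
      (l, x, T, L) ∈ LBranches.toList bs →
      LCtx.ext Δ x .omega T = some Δ' →
      LStepBase Δ (.branch p bs) ⟨p, q, l, x, T⟩ Δ' L

/-- Labelled step of local types: silent steps followed by a labelled action ([Eps]). -/
def LStep (Δ : LCtx) (L : LTy) (α : GLabel) (Δ' : LCtx) (L' : LTy) : Prop :=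
  ∃ (Δ₁ : LCtx) (L₁ : LTy), ESteps Δ L Δ₁ L₁ ∧ LStepBase Δ₁ L₁ α Δ' L'

/- ------------------------------------------------------------------ -/
/- Configurations -/

/-- Configurations: partial maps of participants to local contexts and types. -/
abbrev Config := Role → Option (LCtx × LTy)

/-- LTS over configurations. -/
def CStep (s : Config) (α : GLabel) (s' : Config) : Prop :=
  (∃ c c' : LCtx × LTy, s α.sender = some c ∧ s' α.sender = some c' ∧
      LStep c.1 c.2 α c'.1 c'.2) ∧
  (∃ c c' : LCtx × LTy, s α.receiver = some c ∧ s' α.receiver = some c' ∧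
      LStep c.1 c.2 α c'.1 c'.2) ∧
  (∀ r : Role, r ≠ α.sender → r ≠ α.receiver →
    (s r = none ∧ s' r = none) ∨
    ∃ c c' : LCtx × LTy, s r = some c ∧ s' r = some c' ∧ ESteps c.1 c.2 c'.1 c'.2)

/-- `s ⇔ Γ⟨G⟩`: `s` is the configuration associated to `Γ⟨G⟩`. -/
def AssocCfg (Γ : GCtx) (G : GTy) (s : Config) : Prop :=
  (∀ r ∈ GTy.roles G, ∃ L : LTy, Proj Γ G r L ∧ s r = some (GCtx.proj Γ r, L)) ∧
  (∀ r : Role, r ∉ GTy.roles G → s r = none)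

/-- A configuration satisfies progress. -/
def Config.progress (s : Config) : Prop :=
  (∀ (r : Role) (c : LCtx × LTy), s r = some c → c.2 = LTy.end_) ∨
  (∃ (α : GLabel) (s' : Config), CStep s α s')

/-- Reachability in the global LTS. -/
def GReach : GCtx × GTy → GCtx × GTy → Prop :=
  Relation.ReflTransGen fun a b => ∃ α : GLabel, GStep a.1 a.2 α b.1 b.2

/- ------------------------------------------------------------------ -/
/- Auxiliary machinery for the progress proof -/

lemma GBranches.exists_mem (bs : GBranches) :
    ∃ l x T G, (l, x, T, G) ∈ bs.toList := by
  cases bs with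
  | single l x T G => exact ⟨l, x, T, G, by simp [GBranches.toList]⟩
  | cons l x T G rest => exact ⟨l, x, T, G, by simp [GBranches.toList]⟩

lemma LBranches.mem_substTB (t₀ : TVar) (x₀ : Var) (T₀ : RefTy) (L₀ : LTy) :
    ∀ (bs : LBranches) {l : Label} {x : Var} {T : RefTy} {L : LTy},
    (l, x, T, L) ∈ bs.toList →
    (l, x, T, LTy.substT t₀ x₀ T₀ L₀ L) ∈ (LBranches.substTB t₀ x₀ T₀ L₀ bs).toList
  | .single l' x' T' L', l, x, T, L, h => by
      simp [LBranches.toList] at h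
      obtain ⟨rfl, rfl, rfl, rfl⟩ := h
      simp [LBranches.substTB, LBranches.toList]
  | .cons l' x' T' L' rest, l, x, T, L, h => by
      simp [LBranches.toList] at h
      rcases h with ⟨rfl, rfl, rfl, rfl⟩ | h
      · simp [LBranches.substTB, LBranches.toList]
      · simp only [LBranches.substTB, LBranches.toList, List.mem_cons]
        exact Or.inr (LBranches.mem_substTB t₀ x₀ T₀ L₀ rest h)

/-- Projecting a global-context extension for a role in the role-set. -/
lemma ext_proj : ∀ {Γ : GCtx} {x : Var} {P : Finset Role} {T : RefTy} {Γ' : GCtx},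
    GCtx.ext Γ x P T = some Γ' → ∀ {r : Role}, r ∈ P →
    LCtx.ext (GCtx.proj Γ r) x .omega T = some (GCtx.proj Γ' r) := by
  intro Γ
  induction Γ with
  | nil =>
      intro x P T Γ' h r hr
      simp [GCtx.ext] at h
      subst h
      simp [GCtx.proj, LCtx.ext, if_pos hr]
  | cons b Γ ih =>
      intro x P T Γ' h r hr
      by_cases hbx : b.x = x
      · rw [GCtx.ext, if_pos hbx] at h
        split_ifs at h with hc
        · obtain ⟨hroles, hty⟩ := hc
          injection h with h; subst h
          simp only [GCtx.proj, List.map_cons]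
          rw [LCtx.ext, if_pos hbx,
            if_pos ⟨by cases hm : (if r ∈ b.roles then Mult.omega else Mult.zero) with
              | zero => exact Or.inl rfl
              | omega => exact Or.inr ⟨rfl, rfl⟩, hty⟩]
          simp [if_pos hr]
      · rw [GCtx.ext, if_neg hbx] at h
        cases hG : GCtx.ext Γ x P T with
        | none => rw [hG] at h; simp at h
        | some Γ₁ =>
            rw [hG] at h; simp at h
            subst h
            simp only [GCtx.proj, List.map_cons]
            rw [LCtx.ext, if_neg hbx]
            have h2 := ih hG hr
            simp only [GCtx.proj] at h2 ⊢
            rw [h2]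
            rfl

/-- The number of leading μ-binders of a local type. -/
def LTy.muCount : LTy → ℕ
  | .mu _ _ _ _ B => LTy.muCount B + 1
  | _ => 0

/-- `Fire Δ L α`: `L` under `Δ` can eventually perform the labelled action `α`
(after unfolding its leading recursions). -/
inductive Fire : LCtx → LTy → GLabel → Prop
  | sel {Δ : LCtx} {q : Role} {bs : LBranches} {p : Role} {l : Label} {x : Var}
      {T : RefTy} {L : LTy} {Δ' : LCtx} :
      (l, x, T, L) ∈ LBranches.toList bs →
      LCtx.ext Δ x .omega T = some Δ' →
      Fire Δ (.select q bs) ⟨p, q, l, x, T⟩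
  | brn {Δ : LCtx} {p : Role} {bs : LBranches} {q : Role} {l : Label} {x : Var}
      {T : RefTy} {L : LTy} {Δ' : LCtx} :
      (l, x, T, L) ∈ LBranches.toList bs →
      LCtx.ext Δ x .omega T = some Δ' →
      Fire Δ (.branch p bs) ⟨p, q, l, x, T⟩
  | mu {Δ : LCtx} {t : TVar} {y : Var} {Ty : RefTy} {E : Expr} {B : LTy}
      {Δ' : LCtx} {α : GLabel} :
      LCtx.ext Δ y .omega Ty = some Δ' →
      Fire Δ' B α →
      Fire Δ (.mu t y Ty E B) α

lemma fire_substT {Δ : LCtx} {L : LTy} {α : GLabel} (h : Fire Δ L α)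
    (t₀ : TVar) (x₀ : Var) (T₀ : RefTy) (L₀ : LTy) :
    Fire Δ (LTy.substT t₀ x₀ T₀ L₀ L) α := by
  induction h with
  | sel hmem hext =>
      exact Fire.sel (LBranches.mem_substTB t₀ x₀ T₀ L₀ _ hmem) hext
  | brn hmem hext =>
      exact Fire.brn (LBranches.mem_substTB t₀ x₀ T₀ L₀ _ hmem) hext
  | @mu Δ t y Ty E B Δ' α hext hF ih =>
      by_cases ht : t = t₀
      · rw [LTy.substT, if_pos ht]
        exact Fire.mu hext hF
      · rw [LTy.substT, if_neg ht]
        exact Fire.mu hext ih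

lemma fire_muCount_substT {Δ : LCtx} {L : LTy} {α : GLabel} (h : Fire Δ L α)
    (t₀ : TVar) (x₀ : Var) (T₀ : RefTy) (L₀ : LTy) :
    LTy.muCount (LTy.substT t₀ x₀ T₀ L₀ L) = LTy.muCount L := by
  induction h with
  | sel hmem hext => simp [LTy.substT, LTy.muCount]
  | brn hmem hext => simp [LTy.substT, LTy.muCount]
  | @mu Δ t y Ty E B Δ' α hext hF ih =>
      by_cases ht : t = t₀
      · simp [LTy.substT, if_pos ht]
      · simp [LTy.substT, if_neg ht, LTy.muCount, ih]

lemma fire_lstep : ∀ (n : ℕ) (Δ : LCtx) (L : LTy) (α : GLabel),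
    LTy.muCount L = n → Fire Δ L α → ∃ Δ' L', LStep Δ L α Δ' L' := by
  intro n
  induction n using Nat.strong_induction_on with
  | _ n ih =>
    intro Δ L α hn hF
    cases hF with
    | sel hmem hext =>
        exact ⟨_, _, _, _, Relation.ReflTransGen.refl, LStepBase.send hmem hext⟩
    | brn hmem hext =>
        exact ⟨_, _, _, _, Relation.ReflTransGen.refl, LStepBase.recv hmem hext⟩
    | @mu _ t y Ty E B Δ₁ _ hext hF' =>
        have hF2 := fire_substT hF' t y Ty B
        have hcnt := fire_muCount_substT hF' t y Ty B
        have hlt : LTy.muCount (LTy.substT t y Ty B B) < n := by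
          rw [hcnt]; rw [← hn, LTy.muCount]; omega
        obtain ⟨Δ', L', Δ₂, L₂, hε, hb⟩ :=
          ih _ hlt Δ₁ (LTy.substT t y Ty B B) α rfl hF2
        exact ⟨Δ', L', Δ₂, L₂,
          Relation.ReflTransGen.head (EStep.recur hext) hε, hb⟩

/-- `GSpine G p q l x T`: `G` is a sequence of μ-binders followed by a message
from `p` to `q` having a branch `l(x:T)`. -/
inductive GSpine : GTy → Role → Role → Label → Var → RefTy → Prop
  | msg {p q : Role} {bs : GBranches} {l : Label} {x : Var} {T : RefTy} {G₁ : GTy} :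
      (l, x, T, G₁) ∈ bs.toList →
      GSpine (.msg p q bs) p q l x T
  | mu {t : TVar} {y : Var} {Ty : RefTy} {E : Expr} {B : GTy}
      {p q : Role} {l : Label} {x : Var} {T : RefTy} :
      GSpine B p q l x T →
      GSpine (.mu t y Ty E B) p q l x T

lemma gspine_exists : ∀ (G : GTy), GTy.roles G ≠ ∅ →
    ∃ p q l x T, GSpine G p q l x T
  | .msg p q bs, _ => by
      obtain ⟨l, x, T, G₁, hm⟩ := GBranches.exists_mem bs
      exact ⟨p, q, l, x, T, .msg hm⟩
  | .mu t y Ty E B, h => by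
      have hB : GTy.roles B ≠ ∅ := by
        intro hc; apply h; rw [GTy.roles]; exact hc
      obtain ⟨p, q, l, x, T, hs⟩ := gspine_exists B hB
      exact ⟨p, q, l, x, T, .mu hs⟩
  | .tvar t x E, h => by exact absurd rfl (by rw [GTy.roles] at h; exact h)
  | .end_, h => by exact absurd rfl (by rw [GTy.roles] at h; exact h)

lemma gspine_roles {G : GTy} {p q : Role} {l : Label} {x : Var} {T : RefTy}
    (h : GSpine G p q l x T) : p ∈ GTy.roles G ∧ q ∈ GTy.roles G := by
  induction h with
  | msg _ => refine ⟨?_, ?_⟩ <;> simp [GTy.roles]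
  | mu _ ih => simpa [GTy.roles] using ih

lemma projBranches_mem : ∀ {bs : GBranches} {Γ : GCtx} {p q r : Role} {bs' : LBranches},
    ProjBranches Γ p q bs r bs' →
    ∀ {l : Label} {x : Var} {T : RefTy} {G₁ : GTy},
    (l, x, T, G₁) ∈ GBranches.toList bs →
    ∃ Γ₁ L₁, GCtx.ext Γ x {p, q} T = some Γ₁ ∧ (l, x, T, L₁) ∈ LBranches.toList bs'
  | .single l' x' T' G', Γ, p, q, r, bs', h, l, x, T, G₁, hm => by
      cases h with
      | @single _ _ _ _ _ _ _ _ _ L₂ hw hext hP =>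
          simp [GBranches.toList] at hm
          obtain ⟨rfl, rfl, rfl, rfl⟩ := hm
          exact ⟨_, L₂, hext, by simp [LBranches.toList]⟩
  | .cons l' x' T' G' rest, Γ, p, q, r, bs', h, l, x, T, G₁, hm => by
      cases h with
      | @cons _ _ _ _ _ _ _ _ _ _ L₂ _ hw hext hP hrest =>
          simp [GBranches.toList] at hm
          rcases hm with ⟨rfl, rfl, rfl, rfl⟩ | hm
          · exact ⟨_, L₂, hext, by simp [LBranches.toList]⟩
          · obtain ⟨Γ₁, L₁, h1, h2⟩ := projBranches_mem hrest hm
            refine ⟨Γ₁, L₁, h1, ?_⟩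
            simp only [LBranches.toList, List.mem_cons]
            exact Or.inr h2

lemma proj_fire {G : GTy} {p q : Role} {l : Label} {x : Var} {T : RefTy}
    (hs : GSpine G p q l x T) :
    ∀ {Γ : GCtx} {r : Role} {L : LTy}, Proj Γ G r L → (r = p ∨ r = q) →
      p ≠ q ∧ Fire (GCtx.proj Γ r) L ⟨p, q, l, x, T⟩ := by
  induction hs with
  | msg hmem =>
      intro Γ r L hP hr
      cases hP with
      | send hne hPB =>
          obtain ⟨Γ₁, L₁, hext, hmem'⟩ := projBranches_mem hPB hmem
          exact ⟨hne, Fire.sel hmem' (ext_proj hext (by simp))⟩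
      | recv hne hPB =>
          obtain ⟨Γ₁, L₁, hext, hmem'⟩ := projBranches_mem hPB hmem
          exact ⟨hne, Fire.brn hmem' (ext_proj hext (by simp))⟩
      | phi hrp hrq _ _ =>
          rcases hr with rfl | rfl
          · exact absurd rfl hrp
          · exact absurd rfl hrq
  | mu hs' ih =>
      intro Γ r L hP hr
      cases hP with
      | recIn hrin hwT hE hext hP' =>
          obtain ⟨hne, hF⟩ := ih hP' hr
          exact ⟨hne, Fire.mu (ext_proj hext hrin) hF⟩
      | recOut hnot =>
          exfalso; apply hnot
          have := gspine_roles hs'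
          rcases hr with rfl | rfl
          · exact this.1
          · exact this.2

/-- Progress for well-formed global types under typing contexts. -/
theorem wellformed_progress
    (Γ : GCtx) (G : GTy) (hval : GTy.valid G)
    (hwf : Wellformed Γ G) :
    ∃ s : Config, AssocCfg Γ G s ∧ Config.progress s := by
  classical
  obtain ⟨hftv, hcon, hproj⟩ := hwf
  refine ⟨fun r => if h : r ∈ GTy.roles G
      then some (GCtx.proj Γ r, (hproj r h).choose) else none, ⟨?_, ?_⟩, ?_⟩
  · intro r hr
    exact ⟨(hproj r hr).choose, (hproj r hr).choose_spec, by simp [dif_pos hr]⟩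
  · intro r hr
    simp [dif_neg hr]
  · by_cases hro : GTy.roles G = ∅
    · left
      intro r c hc
      have hr : r ∉ GTy.roles G := by simp [hro]
      simp [dif_neg hr] at hc
    · right
      obtain ⟨p, q, l, x, T, hs⟩ := gspine_exists G hro
      obtain ⟨hp, hq⟩ := gspine_roles hs
      have hPp := (hproj p hp).choose_spec
      have hPq := (hproj q hq).choose_spec
      obtain ⟨hne, hFp⟩ := proj_fire hs hPp (Or.inl rfl)
      obtain ⟨-, hFq⟩ := proj_fire hs hPq (Or.inr rfl)
      obtain ⟨Δp, Lp', hLp⟩ := fire_lstep _ _ _ _ rfl hFp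
      obtain ⟨Δq, Lq', hLq⟩ := fire_lstep _ _ _ _ rfl hFq
      refine ⟨⟨p, q, l, x, T⟩,
        fun r => if r = p then some (Δp, Lp') else if r = q then some (Δq, Lq')
          else if h : r ∈ GTy.roles G then some (GCtx.proj Γ r, (hproj r h).choose)
          else none, ?_, ?_, ?_⟩
      · exact ⟨(GCtx.proj Γ p, (hproj p hp).choose), (Δp, Lp'),
          by simp [dif_pos hp], by simp, hLp⟩
      · exact ⟨(GCtx.proj Γ q, (hproj q hq).choose), (Δq, Lq'),
          by simp [dif_pos hq], by simp [hne, Ne.symm hne], hLq⟩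
      · intro r hrp hrq
        by_cases h : r ∈ GTy.roles G
        · right
          exact ⟨(GCtx.proj Γ r, (hproj r h).choose), (GCtx.proj Γ r, (hproj r h).choose),
            by simp [dif_pos h], by simp [hrp, hrq, dif_pos h], Relation.ReflTransGen.refl⟩
        · left
          constructor
          · simp [dif_neg h]
          · simp [hrp, hrq, dif_neg h]

end RMPST
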